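/- Fix v = (v_1, …, v_d) ∈ ℝ^d. For every ε > 0 there exists r₀ > 0 (one may take r₀ = 1 + max_i |v_i| + 2/min(ε,1)) such that for all real E with |E| > r₀ the following holds: let z ∈ ℂ ∪ {∞} and write z_j = R_{v,E,j}(z) for the iterates on the Riemann sphere. If for some index j₁ ∈ {1, …, d} one has z_{j₁−1} ∉ U_ε(E − v_{j₁}), then for every j₂ with j₁ + 2 ≤ j₂ ≤ d the value z_{j₂} is finite and nonzero, and 1/z_{j₂} ∈ U_ε(E − v_{j₂}). -/

import Mathlib

open scoped Classical

noncomputable section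

/-- The Möbius transformation `z ↦ 1 / (w - z)` of the Riemann sphere `ℂ ∪ {∞}`
(with `∞ ↦ 0` and `w ↦ ∞`); for `w = E - a` this is the projective action of the
Schrödinger matrix `[[E - a, -1], [1, 0]]` in the affine chart `z = ψ₂/ψ₁`. -/
def mobius (w : ℂ) (z : OnePoint ℂ) : OnePoint ℂ :=
  Option.elim z ((0 : ℂ) : OnePoint ℂ)
    fun x => if w = x then OnePoint.infty else (((w - x)⁻¹ : ℂ) : OnePoint ℂ)

/-- `v_j` for the 1-based index `j ∈ {1, …, d}` (junk value `0` outside this range). -/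
def vind {d : ℕ} (v : Fin d → ℝ) (j : ℕ) : ℝ :=
  if h : j - 1 < d then v ⟨j - 1, h⟩ else 0

/-- The composition `R_{v,E,j} = R_{v_j,E} ∘ ⋯ ∘ R_{v_1,E}`, with `R_{v,E,0} = id`. -/
def mobIter {d : ℕ} (v : Fin d → ℝ) (E : ℝ) : ℕ → OnePoint ℂ → OnePoint ℂ
  | 0 => id
  | j + 1 => fun z => mobius ((E : ℂ) - (vind v (j + 1) : ℂ)) (mobIter v E j z)

/-! Put `c = min ε 1`, so that `c ≤ 1/c`, and take `|E|` so large that every centre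
`w_j = E - v_j` has `|w_j| > 2/c`. The map `z ↦ 1/(w - z)` sends a point outside the `c`-disc
around `w` (or `∞`) into the disc of radius `1/c` about `0`, and sends any point of that disc into
the disc of radius `c ≤ 1/c`. Hence from step `j₁` on the iterates stay in the disc of radius
`1/c`, from step `j₁ + 1` on in the disc of radius `c`, and `z_{j₂} = 1/(w_{j₂} - y)` with
`|y| < c ≤ ε`. -/

lemma mobius_infty (w : ℂ) : mobius w OnePoint.infty = ((0 : ℂ) : OnePoint ℂ) := rfl

lemma mobius_coe_of_ne {w x : ℂ} (h : w ≠ x) :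
    mobius w (x : OnePoint ℂ) = (((w - x)⁻¹ : ℂ) : OnePoint ℂ) :=
  if_neg h

lemma exists_mobius_eq_coe_of_inv_lt_norm_sub {w y : ℂ} {c : ℝ} (hc : 0 < c)
    (h : c⁻¹ < ‖w - y‖) :
    ∃ x : ℂ, mobius w (y : OnePoint ℂ) = (x : OnePoint ℂ) ∧ x ≠ 0 ∧ x⁻¹ = w - y ∧ ‖x‖ < c := by
  have hne : w - y ≠ 0 := norm_pos_iff.1 ((inv_pos.2 hc).trans h)
  refine ⟨_, mobius_coe_of_ne (sub_ne_zero.1 hne), inv_ne_zero hne, inv_inv _, ?_⟩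
  rw [norm_inv]
  exact inv_lt_of_inv_lt₀ hc h

lemma exists_mobius_eq_coe_of_notMem_ball {w : ℂ} {ε : ℝ} (hε : 0 < ε) {z : OnePoint ℂ}
    (hz : z ∉ (fun x : ℂ => (x : OnePoint ℂ)) '' Metric.ball w ε) :
    ∃ y : ℂ, mobius w z = (y : OnePoint ℂ) ∧ ‖y‖ ≤ ε⁻¹ := by
  induction z using OnePoint.rec with
  | infty => exact ⟨0, mobius_infty w, by simp [hε.le]⟩
  | coe x =>
    have hdist : ε ≤ ‖w - x‖ := by
      rw [← dist_eq_norm, dist_comm]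
      exact not_lt.1 fun hx => hz ⟨x, hx, rfl⟩
    have hne : w ≠ x := fun h => by simp [h] at hdist; linarith
    exact ⟨_, mobius_coe_of_ne hne, by rw [norm_inv]; exact inv_anti₀ hε hdist⟩

lemma abs_vind_le_sum {d : ℕ} (v : Fin d → ℝ) (j : ℕ) : |vind v j| ≤ ∑ i, |v i| := by
  unfold vind
  split
  · exact Finset.single_le_sum (fun i _ => abs_nonneg (v i)) (Finset.mem_univ _)
  · simpa using Finset.sum_nonneg fun i (_ : i ∈ Finset.univ) => abs_nonneg (v i)

lemma lt_norm_sub_vind {d : ℕ} (v : Fin d → ℝ) {E r : ℝ} (hE : ∑ i, |v i| + r < |E|) (j : ℕ) :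
    r < ‖(E : ℂ) - (vind v j : ℂ)‖ := by
  rw [← Complex.ofReal_sub, Complex.norm_real, Real.norm_eq_abs]
  linarith [abs_vind_le_sum v j, abs_sub_abs_le_abs_sub E (vind v j)]

section Iteration

variable {d : ℕ} {v : Fin d → ℝ} {E c : ℝ} {z : OnePoint ℂ}

lemma exists_mobIter_succ_eq_of_norm_le (hc : 0 < c) {j : ℕ}
    (hw : 2 * c⁻¹ < ‖(E : ℂ) - (vind v (j + 1) : ℂ)‖) {y : ℂ}
    (hy : mobIter v E j z = (y : OnePoint ℂ)) (hyc : ‖y‖ ≤ c⁻¹) :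
    ∃ x : ℂ, mobIter v E (j + 1) z = (x : OnePoint ℂ) ∧ x ≠ 0 ∧
      x⁻¹ = (E : ℂ) - (vind v (j + 1) : ℂ) - y ∧ ‖x‖ < c := by
  show ∃ x : ℂ, mobius _ (mobIter v E j z) = _ ∧ _
  rw [hy]
  refine exists_mobius_eq_coe_of_inv_lt_norm_sub hc ?_
  linarith [norm_sub_norm_le ((E : ℂ) - (vind v (j + 1) : ℂ)) y]

lemma mobIter_add_norm_le (hc : 0 < c) (hcc : c ≤ c⁻¹)
    (hw : ∀ j, 2 * c⁻¹ < ‖(E : ℂ) - (vind v j : ℂ)‖) {j : ℕ} {y : ℂ}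
    (hy : mobIter v E j z = (y : OnePoint ℂ)) (hyc : ‖y‖ ≤ c⁻¹) (k : ℕ) :
    ∃ x : ℂ, mobIter v E (j + k) z = (x : OnePoint ℂ) ∧ ‖x‖ ≤ c⁻¹ := by
  induction k with
  | zero => exact ⟨y, hy, hyc⟩
  | succ k ih =>
    obtain ⟨x, hx, hxc⟩ := ih
    obtain ⟨x', hstep, -, -, hstepc⟩ := exists_mobIter_succ_eq_of_norm_le hc (hw _) hx hxc
    exact ⟨x', hstep, hstepc.le.trans hcc⟩

end Iteration

/-- Lemma 4.3: for fixed `v ∈ ℝ^d` and `ε > 0` there is `r₀ > 0` such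
that for `|E| > r₀`, once an iterate at step `j₁ - 1` avoids the `ε`-disc around
`E - v_{j₁}`, every iterate at step `j₂ ≥ j₁ + 2` is finite, nonzero, and its
reciprocal lies in the `ε`-disc around `E - v_{j₂}`. -/
theorem mobius_iteration_large_energy
    (d : ℕ) (v : Fin d → ℝ) (ε : ℝ) (hε : 0 < ε) :
    ∃ r₀ > (0 : ℝ), ∀ E : ℝ, r₀ < |E| →
      ∀ (z : OnePoint ℂ) (j₁ j₂ : ℕ), 1 ≤ j₁ → j₁ ≤ d → j₁ + 2 ≤ j₂ → j₂ ≤ d →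
        mobIter v E (j₁ - 1) z ∉
          (fun x : ℂ => (x : OnePoint ℂ)) '' Metric.ball ((E : ℂ) - (vind v j₁ : ℂ)) ε →
        ∃ x : ℂ, mobIter v E j₂ z = (x : OnePoint ℂ) ∧ x ≠ 0 ∧
          x⁻¹ ∈ Metric.ball ((E : ℂ) - (vind v j₂ : ℂ)) ε := by
  set c := min ε 1
  have hc : 0 < c := lt_min hε one_pos
  refine ⟨∑ i, |v i| + 2 * c⁻¹, by positivity, fun E hE z j₁ j₂ h₁ _ h₁₂ _ hz => ?_⟩
  have hcc : c ≤ c⁻¹ := (min_le_right ε 1).trans ((one_le_inv₀ hc).2 (min_le_right ε 1))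
  have hw : ∀ j, 2 * c⁻¹ < ‖(E : ℂ) - (vind v j : ℂ)‖ := lt_norm_sub_vind v hE
  obtain ⟨m, rfl⟩ : ∃ m, j₁ = m + 1 := ⟨j₁ - 1, by omega⟩
  obtain ⟨k, rfl⟩ : ∃ k, j₂ = m + 1 + k + 1 + 1 := ⟨j₂ - (m + 3), by omega⟩
  rw [Nat.add_sub_cancel] at hz
  have hz_c := fun h => hz (Set.image_mono (Metric.ball_subset_ball (min_le_left ε 1)) h)
  obtain ⟨y₀, hy₀, hy₀c⟩ := exists_mobius_eq_coe_of_notMem_ball hc hz_c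
  obtain ⟨y, hy, hyc⟩ := mobIter_add_norm_le hc hcc hw (j := m + 1) hy₀ hy₀c k
  obtain ⟨x₁, hx₁, -, -, hx₁c⟩ := exists_mobIter_succ_eq_of_norm_le hc (hw _) hy hyc
  obtain ⟨x, hx, hx₀, hxinv, -⟩ :=
    exists_mobIter_succ_eq_of_norm_le hc (hw _) hx₁ (hx₁c.le.trans hcc)
  refine ⟨x, hx, hx₀, ?_⟩
  rw [hxinv, Metric.mem_ball, dist_eq_norm, sub_sub_cancel_left, norm_neg]
  exact hx₁c.trans_le (min_le_left ε 1)
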